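/- Let 𝒰 be a metrically Ramsey ultrafilter on ℕ (with the metric d(x,y) = |x−y|). If 𝒰 has a thin member T ∈ 𝒰, then there exists a mapping φ : ℕ → ω such that the image ultrafilter φ(𝒰) is a selective (Ramsey) ultrafilter on ω, and φ is finite-to-one on some member U ∈ 𝒰. -/

import Mathlib

/-!
Let `g d` bound the upper ends of the pairs of `T` at distance `≤ d` (finitely many, as `T` is
thin), cut `ℕ` into consecutive blocks, the block starting at `b` having length `g b + 1`, and let
`φ` send a point to the index of its block. As `g` is monotone, an interval `[m, g m]` meets at
most two consecutive blocks. Hence, on the points of `T` whose block index has the parity selected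
by `𝒰`, a pair `(x, x + d)` with ends in different blocks is the only such pair of length `d`.
Colouring each length `d` by the colour of the image of that pair is an isometric colouring, and a
monochrome member of `𝒰` for it maps to a monochrome member of `φ(𝒰)`. The blocks are finite, so
`φ` is finite-to-one and `φ(𝒰)` is free.
-/

open Filter

/-- A `{0,1}`-coloring of pairs of naturals is isometric if it only depends on
the distance `|x - y|`. -/
def IsIsometricColoringNat (χ : ℕ → ℕ → Bool) : Prop :=
  ∀ x y z t : ℕ, dist x y = dist z t → χ x y = χ z t

/-- An ultrafilter on `ℕ` is metrically Ramsey (for the metric `|x - y|`) if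
every isometric coloring has a monochrome member. -/
def MetricallyRamseyNat (𝒰 : Ultrafilter ℕ) : Prop :=
  ∀ χ : ℕ → ℕ → Bool, IsIsometricColoringNat χ →
    ∃ U ∈ 𝒰, ∃ k : Bool, ∀ x ∈ U, ∀ y ∈ U, x ≠ y → χ x y = k

/-- A free ultrafilter on `ℕ` is Ramsey (selective) if every symmetric
`{0,1}`-coloring of pairs has a monochrome member. -/
def IsRamseyUltrafilter (𝒱 : Ultrafilter ℕ) : Prop :=
  (∀ n : ℕ, 𝒱 ≠ pure n) ∧
  ∀ χ : ℕ → ℕ → Bool, (∀ a b, χ a b = χ b a) →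
    ∃ V ∈ 𝒱, ∃ k : Bool, ∀ x ∈ V, ∀ y ∈ V, x ≠ y → χ x y = k

/-- A subset `T = {t_n : n < ω}` of `ℕ` (enumerated increasingly) is thin if
`t_{n+1} - t_n → ∞`. -/
def IsThin (T : Set ℕ) : Prop :=
  ∃ t : ℕ → ℕ, StrictMono t ∧ Set.range t = T ∧
    Filter.Tendsto (fun n => t (n + 1) - t n) Filter.atTop Filter.atTop

theorem Ultrafilter.map_ne_pure_of_finite_preimage {α β : Type*} {𝒰 : Ultrafilter α}
    (hfree : ∀ a, 𝒰 ≠ pure a) {φ : α → β} (hφ : ∀ b, (φ ⁻¹' {b}).Finite) (b : β) :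
    𝒰.map φ ≠ pure b := by
  intro h
  have hb : φ ⁻¹' {b} ∈ 𝒰 := Ultrafilter.mem_map.1 (h ▸ Ultrafilter.mem_pure.2 rfl)
  obtain ⟨a, -, ha⟩ := Ultrafilter.eq_pure_of_finite_mem (hφ b) hb
  exact hfree a ha

theorem floor_dist_self_add (p d : ℕ) : ⌊dist p (p + d)⌋₊ = d := by
  simp [Nat.dist_eq]

section LengthColoring

variable (φ : ℕ → ℕ) (S : Set ℕ)

def SeparatedPair (d x : ℕ) : Prop :=
  x ∈ S ∧ x + d ∈ S ∧ φ x ≠ φ (x + d)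

open Classical in
noncomputable def lengthColoring (χ : ℕ → ℕ → Bool) (d : ℕ) : Bool :=
  if h : ∃ x, SeparatedPair φ S d x then χ (φ h.choose) (φ (h.choose + d)) else false

variable {φ S}

theorem lengthColoring_eq {χ : ℕ → ℕ → Bool} {d x : ℕ}
    (huniq : {x | SeparatedPair φ S d x}.Subsingleton) (hx : SeparatedPair φ S d x) :
    lengthColoring φ S χ d = χ (φ x) (φ (x + d)) := by
  have h : ∃ x, SeparatedPair φ S d x := ⟨x, hx⟩
  rw [lengthColoring, dif_pos h, huniq h.choose_spec hx]

theorem MetricallyRamseyNat.exists_monochrome_map {𝒰 : Ultrafilter ℕ}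
    (hMR : MetricallyRamseyNat 𝒰) (hS : S ∈ 𝒰)
    (huniq : ∀ d, {x | SeparatedPair φ S d x}.Subsingleton)
    {χ : ℕ → ℕ → Bool} (hχ : ∀ a b, χ a b = χ b a) :
    ∃ V ∈ 𝒰.map φ, ∃ k : Bool, ∀ a ∈ V, ∀ b ∈ V, a ≠ b → χ a b = k := by
  obtain ⟨U, hU, k, hk⟩ :=
    hMR (fun u v => lengthColoring φ S χ ⌊dist u v⌋₊) fun _ _ _ _ h => congrArg (fun r => lengthColoring φ S χ ⌊r⌋₊) h
  have hlt : ∀ p ∈ U ∩ S, ∀ q ∈ U ∩ S, p < q → φ p ≠ φ q → χ (φ p) (φ q) = k := by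
    rintro p ⟨hpU, hpS⟩ q ⟨hqU, hqS⟩ hpq hne
    obtain ⟨d, rfl⟩ := Nat.exists_eq_add_of_le hpq.le
    have := hk p hpU _ hqU hpq.ne
    rwa [floor_dist_self_add, lengthColoring_eq (huniq d) ⟨hpS, hqS, hne⟩] at this
  refine ⟨φ '' (U ∩ S), Ultrafilter.mem_map.2
    (mem_of_superset (inter_mem hU hS) (Set.subset_preimage_image _ _)), k, ?_⟩
  rintro _ ⟨p, hp, rfl⟩ _ ⟨q, hq, rfl⟩ hne
  rcases lt_or_gt_of_ne (ne_of_apply_ne φ hne) with h | h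
  · exact hlt p hp q hq h hne
  · rw [hχ]
    exact hlt q hq p hp h hne.symm

theorem MetricallyRamseyNat.isRamseyUltrafilter_map {𝒰 : Ultrafilter ℕ}
    (hfree : ∀ n, 𝒰 ≠ pure n) (hMR : MetricallyRamseyNat 𝒰)
    (hφ : ∀ k, (φ ⁻¹' {k}).Finite) (hS : S ∈ 𝒰)
    (huniq : ∀ d, {x | SeparatedPair φ S d x}.Subsingleton) :
    IsRamseyUltrafilter (𝒰.map φ) :=
  ⟨Ultrafilter.map_ne_pure_of_finite_preimage hfree hφ,
    fun _ hχ => hMR.exists_monochrome_map hS huniq hχ⟩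

end LengthColoring

section Blocks

variable (g : ℕ → ℕ)

def blockStart : ℕ → ℕ
  | 0 => 0
  | j + 1 => blockStart j + g (blockStart j) + 1

def blockIdx (x : ℕ) : ℕ := Nat.findGreatest (fun j => blockStart g j ≤ x) x

theorem blockStart_strictMono : StrictMono (blockStart g) :=
  strictMono_nat_of_lt_succ fun j => by simp only [blockStart]; omega

variable {g}

theorem le_blockIdx {j x : ℕ} (h : blockStart g j ≤ x) : j ≤ blockIdx g x :=
  Nat.le_findGreatest (((blockStart_strictMono g).id_le j).trans h) h

theorem blockStart_blockIdx_le (x : ℕ) : blockStart g (blockIdx g x) ≤ x :=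
  Nat.findGreatest_spec (P := fun j => blockStart g j ≤ x) (Nat.zero_le x) (Nat.zero_le x)

theorem blockIdx_lt {j x : ℕ} (h : x < blockStart g j) : blockIdx g x < j :=
  (blockStart_strictMono g).lt_iff_lt.1 ((blockStart_blockIdx_le x).trans_lt h)

theorem lt_blockStart_blockIdx_succ (x : ℕ) : x < blockStart g (blockIdx g x + 1) := by
  by_contra! h
  exact (blockIdx g x).lt_succ_self.not_ge (le_blockIdx h)

theorem finite_blockIdx_preimage (k : ℕ) : (blockIdx g ⁻¹' {k}).Finite :=
  (Set.finite_Iio (blockStart g (k + 1))).subset fun x (hx : blockIdx g x = k) =>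
    Set.mem_Iio.2 (hx ▸ lt_blockStart_blockIdx_succ x)

theorem blockIdx_eq_or_eq_succ_of_mem_Icc (hg : Monotone g) {m z : ℕ} (hmz : m ≤ z)
    (hzm : z ≤ g m) : blockIdx g z = blockIdx g m ∨ blockIdx g z = blockIdx g m + 1 := by
  have hlow : blockIdx g m ≤ blockIdx g z := le_blockIdx ((blockStart_blockIdx_le m).trans hmz)
  have hup : blockIdx g z < blockIdx g m + 2 := by
    refine blockIdx_lt (hzm.trans_lt ?_)
    have := hg (lt_blockStart_blockIdx_succ (g := g) m).le
    change g m < blockStart g (blockIdx g m + 1) + g (blockStart g (blockIdx g m + 1)) + 1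
    omega
  omega

theorem subsingleton_separatedPair_blockIdx (hg : Monotone g) {S : Set ℕ}
    (hS : ∀ u ∈ S, ∀ v ∈ S, u < v → v ≤ g (v - u)) {r : ℕ}
    (hr : ∀ z ∈ S, blockIdx g z % 2 = r) (d : ℕ) :
    {x | SeparatedPair (blockIdx g) S d x}.Subsingleton := by
  intro x hx y hy
  wlog hxy : x ≤ y generalizing x y
  · exact (this hy hx (le_of_not_ge hxy)).symm
  obtain ⟨-, hxdS, -⟩ := hx
  obtain ⟨hyS, hydS, hne⟩ := hy
  by_contra hxy'
  -- `y` and `y + d` both lie in `[m, g m]`, hence in two consecutive blocks of equal parity.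
  have hd : 0 < d := Nat.pos_of_ne_zero (by rintro rfl; exact hne rfl)
  set m := min d (y - x)
  have hm : m ≤ y := (min_le_right _ _).trans (Nat.sub_le y x)
  have hbound : y + d ≤ g m := by
    rw [hg.map_min]
    refine le_min ?_ ?_
    · simpa using hS y hyS (y + d) hydS (by omega)
    · simpa [Nat.add_sub_add_right] using hS (x + d) hxdS (y + d) hydS (by omega)
  have h1 := blockIdx_eq_or_eq_succ_of_mem_Icc hg hm (by omega)
  have h2 := blockIdx_eq_or_eq_succ_of_mem_Icc hg (hm.trans le_self_add) hbound
  have := hr y hyS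
  have := hr _ hydS
  omega

end Blocks

def pairTops (T : Set ℕ) (d : ℕ) : Set ℕ := {v ∈ T | ∃ u ∈ T, u < v ∧ v - u ≤ d}

noncomputable def pairBound (T : Set ℕ) (d : ℕ) : ℕ := sSup (pairTops T d)

theorem IsThin.bddAbove_pairTops {T : Set ℕ} (hT : IsThin T) (d : ℕ) :
    BddAbove (pairTops T d) := by
  obtain ⟨t, ht, rfl, hgap⟩ := hT
  obtain ⟨N, hN⟩ := eventually_atTop.1 (hgap.eventually_ge_atTop (d + 1))
  refine ⟨t N, ?_⟩
  rintro _ ⟨⟨n, rfl⟩, _, ⟨m, rfl⟩, hmn, hd⟩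
  by_contra! hNn
  have hmn' := ht.lt_iff_lt.1 hmn
  have hNn' := ht.lt_iff_lt.1 hNn
  obtain ⟨k, rfl⟩ : ∃ k, n = k + 1 := ⟨n - 1, by omega⟩
  have := hN k (by omega)
  have := ht.monotone (show m ≤ k by omega)
  omega

theorem le_pairBound {T : Set ℕ} {u v : ℕ} (hT : BddAbove (pairTops T (v - u)))
    (hu : u ∈ T) (hv : v ∈ T) (huv : u < v) : v ≤ pairBound T (v - u) :=
  le_csSup hT ⟨hv, u, hu, huv, le_rfl⟩

theorem monotone_pairBound {T : Set ℕ} (hT : ∀ d, BddAbove (pairTops T d)) :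
    Monotone (pairBound T) :=
  fun _ d' h => csSup_le_csSup' (hT d') fun _ ⟨hv, u, hu, huv, hd⟩ => ⟨hv, u, hu, huv, hd.trans h⟩

/-- Proposition 3.2: if a metrically Ramsey ultrafilter `𝒰` on `ℕ` has a thin
member, then there is `φ : ℕ → ω` such that `φ(𝒰)` is a selective (Ramsey)
ultrafilter and `φ` is finite-to-one on some member of `𝒰`. -/
theorem stmt18 (𝒰 : Ultrafilter ℕ) (hfree : ∀ n : ℕ, 𝒰 ≠ pure n)
    (hMR : MetricallyRamseyNat 𝒰) (T : Set ℕ) (hT : T ∈ 𝒰) (hthin : IsThin T) :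
    ∃ φ : ℕ → ℕ, IsRamseyUltrafilter (Ultrafilter.map φ 𝒰) ∧
      ∃ U ∈ 𝒰, ∀ k : ℕ, (U ∩ φ ⁻¹' {k}).Finite := by
  have hbdd := hthin.bddAbove_pairTops
  obtain ⟨r, hr⟩ : ∃ r, ∀ᶠ z in 𝒰, blockIdx (pairBound T) z % 2 = r := by
    rcases Ultrafilter.eventually_or.1
      (Eventually.of_forall fun z => Nat.mod_two_eq_zero_or_one (blockIdx (pairBound T) z))
      with h | h
    exacts [⟨0, h⟩, ⟨1, h⟩]
  refine ⟨blockIdx (pairBound T), hMR.isRamseyUltrafilter_map hfree finite_blockIdx_preimage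
    (inter_mem hT hr) (subsingleton_separatedPair_blockIdx (monotone_pairBound hbdd)
      (fun u hu v hv huv => le_pairBound (hbdd _) hu.1 hv.1 huv) fun z hz => hz.2),
    Set.univ, univ_mem, fun k => finite_blockIdx_preimage k |>.subset Set.inter_subset_right⟩
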